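/- Let N ≥ 0 and 0 ≤ j < i ≤ N be integers. Then ∫_{−1}^{1} ((1−c)/2)^{2+(N−i)+(N−j)} · P_i^{(2N+3−2i,0)}(c) · P_j^{(2N+3−2j,0)}(c) dc = 0. -/

import Mathlib

/-!
Put `y = (1 + c) / 2`, so that `(1 - c) / 2 = 1 - y`. Expanding `P_n^{(α,0)}` and integrating term by
term with the Beta integral `∫₀¹ (1 - y)^a y^b dy = a! b! / (a + b + 1)!` turns
`∫ ((1 - c) / 2)^α P_n^{(α,0)}(c) y^m dc` into a multiple of `∑ₛ (-1)^s C(n, s) Q(s)` with `Q` a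
polynomial of degree `m`: an `n`-th finite difference, which vanishes for `m < n`. Hence
`P_n^{(α,0)}` is orthogonal to all polynomials of degree `< n` for the weight `((1 - c) / 2)^α`.
In the theorem the weight is `((1 - c) / 2)^(2N + 3 - 2i)` times `((1 - c) / 2)^(i - j - 1)`, and
the latter factor times `P_j^{(2N+3-2j,0)}` has degree `i - 1`.
-/

open Finset in
/-- The Jacobi polynomial `P_n^{(α,0)}` (as a real function), defined by the explicit
formula `P_n^{(α,0)}(x) = ∑_{s=0}^{n} C(n+α, n−s)·C(n, s)·((x−1)/2)^s·((x+1)/2)^{n−s}`. -/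
noncomputable def jacobiP (n α : ℕ) (x : ℝ) : ℝ :=
  ∑ s ∈ range (n + 1),
    ((n + α).choose (n - s) : ℝ) * (n.choose s : ℝ) * ((x - 1) / 2) ^ s * ((x + 1) / 2) ^ (n - s)

open Finset Polynomial Nat

theorem Polynomial.sum_range_neg_one_pow_mul_choose_mul_eval_eq_zero {R : Type*} [CommRing R]
    {P : R[X]} {n : ℕ} (hP : P.natDegree < n) :
    ∑ k ∈ range (n + 1), (-1) ^ k * (n.choose k : R) * P.eval (k : R) = 0 := by
  have h := fwdDiff_iter_eq_sum_shift (1 : R) P.eval n 0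
  simp only [fwdDiff_iter_eq_zero_of_degree_lt hP, Pi.zero_apply, zero_add, nsmul_eq_mul, mul_one,
    zsmul_eq_mul] at h
  push_cast at h
  calc _ = (-1) ^ n * ∑ k ∈ range (n + 1), (-1) ^ (n - k) * (n.choose k : R) * P.eval (k : R) := by
        rw [mul_sum]
        refine sum_congr rfl fun k _ => ?_
        rw [← mul_assoc, ← mul_assoc, ← pow_add,
          show n + (n - k) = k + 2 * (n - k) by grind, pow_add, pow_mul, neg_one_sq, one_pow,
          mul_one]
    _ = 0 := by rw [← h, mul_zero]

theorem integral_one_sub_div_two_pow_mul_one_add_div_two_pow (a b : ℕ) :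
    ∫ c in (-1 : ℝ)..1, ((1 - c) / 2) ^ a * ((1 + c) / 2) ^ b = 2 * a ! * b ! / (a + b + 1)! := by
  induction a generalizing b with
  | zero =>
    have h := intervalIntegral.integral_comp_div_add (fun y : ℝ => y ^ b) two_ne_zero (1 / 2)
      (a := -1) (b := 1)
    norm_num [integral_pow] at h
    have hshift : ∀ c : ℝ, (1 + c) / 2 = c / 2 + 1 / 2 := fun c => by ring
    simp_rw [pow_zero, one_mul, hshift, h, zero_add, factorial_zero, factorial_succ]
    push_cast
    field_simp
  | succ a ih =>
    have hsplit : ∀ c : ℝ, ((1 - c) / 2) ^ (a + 1) * ((1 + c) / 2) ^ b =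
        ((1 - c) / 2) ^ a * ((1 + c) / 2) ^ b - ((1 - c) / 2) ^ a * ((1 + c) / 2) ^ (b + 1) :=
      fun c => by ring
    simp_rw [hsplit]
    rw [intervalIntegral.integral_sub (by apply Continuous.intervalIntegrable; fun_prop)
      (by apply Continuous.intervalIntegrable; fun_prop), ih, ih,
      show a + (b + 1) + 1 = a + b + 1 + 1 by ring, show a + 1 + b + 1 = a + b + 1 + 1 by ring,
      factorial_succ (a + b + 1), factorial_succ a, factorial_succ b]
    push_cast
    field_simp
    ring

theorem Nat.choose_mul_factorial_mul_factorial_add {p k : ℕ} (hk : k ≤ p) (m : ℕ) :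
    p.choose k * (p - k)! * (k + m)! = p ! * (k + 1).ascFactorial m := by
  rw [← factorial_mul_ascFactorial k m, ← choose_mul_factorial_mul_factorial hk]
  ring

theorem integral_one_sub_div_two_pow_mul_jacobiP_mul_pow_eq_zero {n m : ℕ} (α : ℕ) (hm : m < n) :
    ∫ c in (-1 : ℝ)..1, ((1 - c) / 2) ^ α * jacobiP n α c * ((1 + c) / 2) ^ m = 0 := by
  have hexpand : ∀ c : ℝ, ((1 - c) / 2) ^ α * jacobiP n α c * ((1 + c) / 2) ^ m =
      ∑ s ∈ range (n + 1), (-1) ^ s * ((n + α).choose (n - s) * n.choose s : ℝ) *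
        (((1 - c) / 2) ^ (α + s) * ((1 + c) / 2) ^ (n - s + m)) := by
    intro c
    simp only [jacobiP, mul_sum, sum_mul]
    refine sum_congr rfl fun s _ => ?_
    rw [show (c - 1) / 2 = -((1 - c) / 2) by ring, neg_pow, add_comm c 1]
    ring
  -- `Q(s) = (n - s + 1) ⋯ (n - s + m) = (n - s + m)! / (n - s)!`
  set Q : ℝ[X] := (ascPochhammer ℝ m).comp (C ((n : ℝ) + 1) - X)
  have hQ : Q.natDegree < n := by
    rwa [natDegree_comp, ascPochhammer_natDegree, natDegree_sub_eq_right_of_natDegree_lt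
      (by rw [natDegree_C, natDegree_X]; exact one_pos), natDegree_X, mul_one]
  have hterm : ∀ s ∈ range (n + 1), (-1) ^ s * ((n + α).choose (n - s) * n.choose s : ℝ) *
        (2 * (α + s)! * (n - s + m)! / (α + s + (n - s + m) + 1)!) =
      2 * (n + α)! / (n + α + m + 1)! * ((-1) ^ s * n.choose s * Q.eval (s : ℝ)) := by
    intro s hs
    have hsn : s ≤ n := Nat.lt_succ_iff.mp (mem_range.mp hs)
    have key := congrArg (Nat.cast : ℕ → ℝ)
      (choose_mul_factorial_mul_factorial_add (by omega : n - s ≤ n + α) m)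
    rw [show n + α - (n - s) = α + s by omega] at key
    push_cast at key
    rw [show α + s + (n - s + m) + 1 = n + α + m + 1 by omega, eval_comp, eval_sub, eval_C, eval_X,
      show (n : ℝ) + 1 - s = ((n - s + 1 : ℕ) : ℝ) by push_cast [hsn]; ring,
      ascPochhammer_nat_eq_natCast_ascFactorial]
    linear_combination (2 * (-1) ^ s * n.choose s / (n + α + m + 1)! : ℝ) * key
  simp_rw [hexpand]
  rw [intervalIntegral.integral_finsetSum fun s _ => by
      apply Continuous.intervalIntegrable; fun_prop]
  simp_rw [intervalIntegral.integral_const_mul,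
    integral_one_sub_div_two_pow_mul_one_add_div_two_pow]
  rw [sum_congr rfl hterm, ← mul_sum, sum_range_neg_one_pow_mul_choose_mul_eval_eq_zero hQ,
    mul_zero]

theorem integral_one_sub_div_two_pow_mul_jacobiP_mul_eval_eq_zero {n : ℕ} (α : ℕ) {q : ℝ[X]}
    (hq : q.natDegree < n) :
    ∫ c in (-1 : ℝ)..1, ((1 - c) / 2) ^ α * jacobiP n α c * q.eval ((1 + c) / 2) = 0 := by
  simp_rw [eval_eq_sum_range' hq, mul_sum]
  rw [intervalIntegral.integral_finsetSum fun m _ => by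
      apply Continuous.intervalIntegrable; unfold jacobiP; fun_prop]
  refine sum_eq_zero fun m hm => ?_
  simp_rw [mul_left_comm _ (q.coeff m), intervalIntegral.integral_const_mul]
  rw [integral_one_sub_div_two_pow_mul_jacobiP_mul_pow_eq_zero α (mem_range.mp hm), mul_zero]

noncomputable def shiftedJacobi (n α : ℕ) : ℝ[X] :=
  ∑ s ∈ range (n + 1), C ((n + α).choose (n - s) * n.choose s : ℝ) * (X - 1) ^ s * X ^ (n - s)

theorem jacobiP_eq_eval_shiftedJacobi (n α : ℕ) (x : ℝ) :
    jacobiP n α x = (shiftedJacobi n α).eval ((1 + x) / 2) := by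
  simp only [jacobiP, shiftedJacobi, eval_finsetSum, eval_mul, eval_pow, eval_sub, eval_C, eval_X,
    eval_one]
  refine sum_congr rfl fun s _ => ?_
  rw [show (1 + x) / 2 - 1 = (x - 1) / 2 by ring, add_comm 1 x]

theorem natDegree_shiftedJacobi_le (n α : ℕ) : (shiftedJacobi n α).natDegree ≤ n := by
  refine natDegree_sum_le_of_forall_le _ _ fun s hs => ?_
  have hsn := mem_range.mp hs
  compute_degree
  omega

/-- For integers `N ≥ 0` and `0 ≤ j < i ≤ N`,
`∫_{−1}^{1} ((1−c)/2)^{2+(N−i)+(N−j)} · P_i^{(2N+3−2i,0)}(c) · P_j^{(2N+3−2j,0)}(c) dc = 0`. -/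
theorem jacobi_weighted_orthogonality (N i j : ℕ) (hji : j < i) (hiN : i ≤ N) :
    ∫ c in (-1 : ℝ)..1,
        ((1 - c) / 2) ^ (2 + (N - i) + (N - j)) *
          jacobiP i (2 * N + 3 - 2 * i) c * jacobiP j (2 * N + 3 - 2 * j) c = 0 := by
  set q : ℝ[X] := (1 - X) ^ (i - j - 1) * shiftedJacobi j (2 * N + 3 - 2 * j)
  have hq : q.natDegree < i := by
    have hlin : ((1 : ℝ[X]) - X).natDegree ≤ 1 := by compute_degree
    calc q.natDegree ≤ (i - j - 1) * 1 + j := natDegree_mul_le_of_le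
          (natDegree_pow_le_of_le _ hlin) (natDegree_shiftedJacobi_le j _)
      _ < i := by omega
  rw [← integral_one_sub_div_two_pow_mul_jacobiP_mul_eval_eq_zero (2 * N + 3 - 2 * i) hq]
  refine intervalIntegral.integral_congr fun c _ => ?_
  simp only [q, eval_mul, eval_pow, eval_sub, eval_one, eval_X, ← jacobiP_eq_eval_shiftedJacobi,
    show 2 + (N - i) + (N - j) = (2 * N + 3 - 2 * i) + (i - j - 1) by omega, pow_add]
  rw [show 1 - (1 + c) / 2 = (1 - c) / 2 by ring]
  ring
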